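/- arXiv:2410.07685 — 2 statements merged into one kernel-verified Lean document; each statement's English description precedes it below -/
import Mathlib

section
/- If G is a tree with d vertices (d ≥ 1), then the resilience of G is at most log₂(d) + 1. -/
open SimpleGraph

/-- One step of a disintegration: `D` consists of exactly one vertex from each
connected component of the subgraph of `G` induced on `R`. -/
def DisStep {V : Type*} (G : SimpleGraph V) (R D : Set V) : Prop :=
  ∃ hsub : D ⊆ R,
    (∀ (v w : V) (hv : v ∈ D) (hw : w ∈ D), v ≠ w →
      (G.induce R).connectedComponentMk ⟨v, hsub hv⟩ ≠
        (G.induce R).connectedComponentMk ⟨w, hsub hw⟩) ∧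
    (∀ c : (G.induce R).ConnectedComponent, ∃ (v : V) (hv : v ∈ D),
      (G.induce R).connectedComponentMk ⟨v, hsub hv⟩ = c)

/-- `(D 0, D 1, ..., D (r-1))` is a disintegration of `G`: the steps partition the
vertex set and each step removes exactly one vertex per connected component of what remains. -/
def IsDisintegration {V : Type*} (G : SimpleGraph V) (D : ℕ → Set V) (r : ℕ) : Prop :=
  (∀ i, r ≤ i → D i = ∅) ∧ (⋃ i, D i) = Set.univ ∧
    ∀ i, DisStep G (Set.univ \ ⋃ j < i, D j) (D i)

/-- The graph resilience: minimal length of a disintegration. -/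
noncomputable def resilience {V : Type*} (G : SimpleGraph V) : ℕ :=
  sInf {r | ∃ D, IsDisintegration G D r}

/-! Every finite tree has a centroid (Jordan): a vertex whose deletion leaves only components with
at most half of its vertices. Deleting one centroid from each connected component of what is left
is a legal disintegration step, and it at least halves every component; so after
`⌊log₂ d⌋ + 1` rounds nothing remains. -/

section Greedy

variable {V : Type*}

def greedyResidual (step : Set V → Set V) : ℕ → Set V
  | 0 => Set.univ
  | i + 1 => greedyResidual step i \ step (greedyResidual step i)

lemma greedyResidual_eq (step : Set V → Set V) (i : ℕ) :
    greedyResidual step i = Set.univ \ ⋃ j < i, step (greedyResidual step j) := by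
  induction i with
  | zero => simp [greedyResidual]
  | succ i ih => rw [greedyResidual, Set.biUnion_lt_succ, ← Set.sdiff_sdiff, ← ih]

lemma greedyResidual_antitone (step : Set V → Set V) : Antitone (greedyResidual step) :=
  antitone_nat_of_succ_le fun _ => Set.sdiff_subset

variable {G : SimpleGraph V}

theorem isDisintegration_greedy {step : Set V → Set V} (hstep : ∀ S, DisStep G S (step S))
    {r : ℕ} (hr : greedyResidual step r = ∅) :
    IsDisintegration G (fun i => step (greedyResidual step i)) r := by
  refine ⟨fun i hi => ?_, ?_, fun i => greedyResidual_eq step i ▸ hstep _⟩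
  · exact Set.subset_eq_empty (((hstep _).1).trans (greedyResidual_antitone step hi)) hr
  · have hcover := greedyResidual_eq step r
    rw [hr, eq_comm, Set.sdiff_eq_empty] at hcover
    exact Set.eq_univ_of_univ_subset
      (hcover.trans (Set.iUnion₂_subset fun j _ =>
        Set.subset_iUnion (fun i => step (greedyResidual step i)) j))

end Greedy

namespace SimpleGraph

variable {V : Type*} {G : SimpleGraph V} {S T : Set V} {u v w : V}

def ReachableIn (G : SimpleGraph V) (S : Set V) (v w : V) : Prop :=
  ∃ p : G.Walk v w, ∀ x ∈ p.support, x ∈ S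

/-- Empty when `v ∉ S`. -/
def componentIn (G : SimpleGraph V) (S : Set V) (v : V) : Set V :=
  {w | G.ReachableIn S v w}

namespace ReachableIn

lemma left_mem (h : G.ReachableIn S v w) : v ∈ S :=
  h.choose_spec _ h.choose.start_mem_support

lemma right_mem (h : G.ReachableIn S v w) : w ∈ S :=
  h.choose_spec _ h.choose.end_mem_support

lemma refl (hv : v ∈ S) : G.ReachableIn S v v :=
  ⟨.nil, by simpa using hv⟩

lemma symm (h : G.ReachableIn S v w) : G.ReachableIn S w v :=
  let ⟨p, hp⟩ := h
  ⟨p.reverse, by simpa using hp⟩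

lemma trans (h : G.ReachableIn S u v) (h' : G.ReachableIn S v w) : G.ReachableIn S u w :=
  let ⟨p, hp⟩ := h
  let ⟨q, hq⟩ := h'
  ⟨p.append q, fun x hx => (Walk.mem_support_append_iff p q).1 hx |>.elim (hp x) (hq x)⟩

lemma of_adj (h : G.Adj v w) (hv : v ∈ S) (hw : w ∈ S) : G.ReachableIn S v w :=
  ⟨h.toWalk, by simp [hv, hw]⟩

lemma mono (hST : S ⊆ T) (h : G.ReachableIn S v w) : G.ReachableIn T v w :=
  let ⟨p, hp⟩ := h
  ⟨p, fun x hx => hST (hp x hx)⟩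

lemma mem_of_closed {A : Set V} (h : G.ReachableIn S v w) (hv : v ∈ A)
    (hA : ∀ x y, x ∈ A → y ∈ S → G.Adj x y → y ∈ A) : w ∈ A := by
  obtain ⟨p, hp⟩ := h
  induction p with
  | nil => exact hv
  | cons hadj q ih =>
    exact ih (hA _ _ hv (hp _ (by simp)) hadj) fun x hx => hp x (by simp [hx])

lemma componentIn (h : G.ReachableIn S v w) : G.ReachableIn (G.componentIn S v) v w := by
  classical
  obtain ⟨p, hp⟩ := h
  exact ⟨p, fun x hx =>
    ⟨p.takeUntil x hx, fun y hy => hp y (p.support_takeUntil_subset_support hx hy)⟩⟩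

end ReachableIn

lemma reachable_induce_iff_reachableIn (hv : v ∈ S) (hw : w ∈ S) :
    (G.induce S).Reachable ⟨v, hv⟩ ⟨w, hw⟩ ↔ G.ReachableIn S v w :=
  ⟨fun ⟨p⟩ => ⟨p.map (Embedding.induce S).toHom, fun x hx => by
    obtain ⟨y, -, rfl⟩ := List.mem_map.1 (Walk.support_map _ p ▸ hx); exact y.2⟩,
    fun ⟨p, hp⟩ => ⟨p.induce S hp⟩⟩

lemma mem_componentIn_self (hv : v ∈ S) : v ∈ G.componentIn S v :=
  ReachableIn.refl hv

lemma componentIn_subset : G.componentIn S v ⊆ S :=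
  fun _ h => h.right_mem

lemma componentIn_eq_of_mem (h : w ∈ G.componentIn S v) : G.componentIn S w = G.componentIn S v :=
  Set.ext fun _ => ⟨h.trans, (ReachableIn.symm h).trans⟩

lemma ReachableIn.exists_adj_of_ne {c : V} (h : G.ReachableIn S w c) (hne : w ≠ c) :
    ∃ u, G.Adj u c ∧ G.ReachableIn (S \ {c}) w u := by
  obtain ⟨p, hp⟩ := h
  induction p with
  | nil => exact absurd rfl hne
  | @cons w x c hadj q ih =>
    have hw : w ∈ S \ {c} := ⟨hp w (by simp), hne⟩
    by_cases hx : x = c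
    · subst hx
      exact ⟨w, hadj, .refl hw⟩
    · obtain ⟨u, huc, hxu⟩ := ih hx fun y hy => hp y (by simp [hy])
      exact ⟨u, huc, (ReachableIn.of_adj hadj hw ⟨hp x (by simp), hx⟩).trans hxu⟩

/-- In a forest, two neighbours of `c` that are connected avoiding `c` coincide: otherwise the
edge to `c` would close a cycle. -/
lemma IsAcyclic.eq_of_adj_of_reachableIn (hA : G.IsAcyclic) {u₁ u₂ c : V} (h₁ : G.Adj u₁ c)
    (h₂ : G.Adj u₂ c) (h : G.ReachableIn (S \ {c}) u₁ u₂) : u₁ = u₂ := by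
  obtain ⟨p, hp⟩ := h
  have hbridge := isBridge_iff_forall_walk_mem_edges.1
    (isAcyclic_iff_forall_adj_isBridge.1 hA h₁) (p.concat h₂)
  rw [Walk.edges_concat, List.concat_eq_append, List.mem_append, List.mem_singleton] at hbridge
  rcases hbridge with he | he
  · exact absurd rfl (hp c (p.snd_mem_support_of_mem_edges he)).2
  · simpa [h₁.ne] using he

/-- Jordan: take `c` minimising the largest component of `C \ {c}`. Were some component `C'` of
it more than half of `C`, then for the unique neighbour `u` of `c` in `C'` every component of
`C \ {u}` would lie in `C' \ {u}` or in `C \ C'`, both smaller than `C'`. -/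
theorem IsAcyclic.exists_centroid (hA : G.IsAcyclic) {C : Set V} (hfin : C.Finite)
    (hne : C.Nonempty) (hC : ∀ v ∈ C, ∀ w ∈ C, G.ReachableIn C v w) :
    ∃ c ∈ C, ∀ w, 2 * (G.componentIn (C \ {c}) w).ncard ≤ C.ncard := by
  set f : V → ℕ := fun x => hfin.toFinset.sup fun w => (G.componentIn (C \ {x}) w).ncard
  obtain ⟨c, hcC, hmin⟩ := hfin.toFinset.exists_min_image f (by simpa using hne)
  rw [Set.Finite.mem_toFinset] at hcC
  refine ⟨c, hcC, fun w => ?_⟩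
  by_contra! hheavy
  set C' := G.componentIn (C \ {c}) w
  have hC'C : C' ⊆ C \ {c} := componentIn_subset
  have hC'fin : C'.Finite := hfin.subset (hC'C.trans Set.sdiff_subset)
  obtain ⟨x, hx⟩ := (Set.ncard_pos hC'fin).1 (by omega)
  have hwC : w ∈ C \ {c} := ReachableIn.left_mem hx
  obtain ⟨u, huc, hwu⟩ := (hC w hwC.1 c hcC).exists_adj_of_ne hwC.2
  have huC' : u ∈ C' := hwu
  have hinside : ∀ x ∈ C', G.componentIn (C \ {u}) x ⊆ C' \ {u} := by
    intro x hx y hy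
    have hxu : x ∈ C' \ {u} := ⟨hx, fun h => (h ▸ hy.left_mem).2 rfl⟩
    refine hy.mem_of_closed hxu ?_
    rintro a b ⟨haC', hau⟩ ⟨hbC, hbu⟩ hab
    have hbc : b ≠ c := by
      rintro rfl
      exact hau (hA.eq_of_adj_of_reachableIn hab huc ((ReachableIn.symm haC').trans hwu))
    exact ⟨haC'.trans (.of_adj hab (componentIn_subset haC') ⟨hbC, hbc⟩), hbu⟩
  have houtside : ∀ x ∉ C', G.componentIn (C \ {u}) x ⊆ C \ C' := fun x hx y hy =>
    ⟨(componentIn_subset hy).1, fun hyC' => hx (hinside y hyC' (ReachableIn.symm hy)).1⟩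
  have hfu : f u < C'.ncard := by
    refine (Finset.sup_lt_iff ((Set.ncard_pos hC'fin).2 ⟨u, huC'⟩)).2 fun x _ => ?_
    by_cases hxC' : x ∈ C'
    · calc _ ≤ (C' \ {u}).ncard := Set.ncard_le_ncard (hinside x hxC') (hC'fin.sdiff)
        _ < C'.ncard := Set.ncard_sdiff_singleton_lt_of_mem huC' hC'fin
    · calc _ ≤ (C \ C').ncard := Set.ncard_le_ncard (houtside x hxC') hfin.sdiff
        _ = C.ncard - C'.ncard := Set.ncard_sdiff (hC'C.trans Set.sdiff_subset) hC'fin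
        _ < C'.ncard := by omega
  have hfc : C'.ncard ≤ f c :=
    Finset.le_sup (f := fun w => (G.componentIn (C \ {c}) w).ncard) (by simpa using hwC.1)
  exact (hmin u (by simpa using hC'C huC' |>.1)).not_gt (hfu.trans_le hfc)

lemma reachableIn_componentIn {x y : V} (hx : x ∈ G.componentIn S v)
    (hy : y ∈ G.componentIn S v) :
    G.ReachableIn (G.componentIn S v) x y := by
  simpa [componentIn_eq_of_mem hx] using ((ReachableIn.symm hx).trans hy).componentIn

section Centroids

variable [Finite V]

theorem IsAcyclic.exists_centroid_induce (hA : G.IsAcyclic)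
    (K : (G.induce S).ConnectedComponent) :
    ∃ c : S, (G.induce S).connectedComponentMk c = K ∧ ∀ w,
      2 * (G.componentIn (G.componentIn S c \ {(c : V)}) w).ncard ≤ (G.componentIn S c).ncard := by
  obtain ⟨⟨v, hv⟩, rfl⟩ := K.exists_rep
  obtain ⟨c, hc, hcent⟩ := hA.exists_centroid (Set.toFinite _) ⟨v, mem_componentIn_self hv⟩
    fun x hx y hy => reachableIn_componentIn hx hy
  refine ⟨⟨c, componentIn_subset hc⟩, ?_, by rwa [componentIn_eq_of_mem hc]⟩
  exact ConnectedComponent.sound ((reachable_induce_iff_reachableIn _ _).2 (ReachableIn.symm hc))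

variable (hA : G.IsAcyclic)

noncomputable def IsAcyclic.centroid (S : Set V) (K : (G.induce S).ConnectedComponent) : S :=
  (hA.exists_centroid_induce K).choose

def IsAcyclic.centroids (S : Set V) : Set V :=
  Set.range fun K => (hA.centroid S K : V)

theorem IsAcyclic.disStep_centroids (S : Set V) : DisStep G S (hA.centroids S) := by
  have hmk (K) : (G.induce S).connectedComponentMk (hA.centroid S K) = K :=
    (hA.exists_centroid_induce K).choose_spec.1
  refine ⟨?_, ?_, fun K => ⟨_, ⟨K, rfl⟩, hmk K⟩⟩
  · rintro _ ⟨K, rfl⟩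
    exact (hA.centroid S K).2
  · rintro _ _ ⟨K, rfl⟩ ⟨K', rfl⟩ hne heq
    obtain rfl : K = K' := (hmk K).symm.trans (heq.trans (hmk K'))
    exact hne rfl

theorem IsAcyclic.two_mul_ncard_componentIn_sdiff_centroids_le (hv : v ∈ S \ hA.centroids S) :
    2 * (G.componentIn (S \ hA.centroids S) v).ncard ≤ (G.componentIn S v).ncard := by
  set K := (G.induce S).connectedComponentMk ⟨v, hv.1⟩
  obtain ⟨hmk, hcent⟩ := (hA.exists_centroid_induce K).choose_spec
  set c := hA.centroid S K
  have hcv : G.ReachableIn S c v :=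
    (reachable_induce_iff_reachableIn c.2 hv.1).1 (ConnectedComponent.exact hmk)
  have hcD : (c : V) ∈ hA.centroids S := ⟨K, rfl⟩
  have hsub : G.componentIn (S \ hA.centroids S) v ⊆
      G.componentIn (G.componentIn S c \ {(c : V)}) v :=
    fun y hy => hy.componentIn.mono fun z hz =>
      ⟨hcv.trans (hz.mono Set.sdiff_subset), fun h => (componentIn_subset hz).2 (h ▸ hcD)⟩
  rw [componentIn_eq_of_mem hcv]
  exact (Nat.mul_le_mul_left 2 (Set.ncard_le_ncard hsub)).trans (hcent v)

end Centroids

theorem IsAcyclic.resilience_le_of_card_lt [Finite V] (hA : G.IsAcyclic) {r : ℕ}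
    (hr : Nat.card V < 2 ^ r) : resilience G ≤ r := by
  set R := greedyResidual hA.centroids
  have hbound (i : ℕ) : ∀ v ∈ R i, 2 ^ i * (G.componentIn (R i) v).ncard ≤ Nat.card V := by
    induction i with
    | zero =>
      intro v _
      simpa [R, greedyResidual, ← Set.ncard_univ] using
        Set.ncard_le_ncard (Set.subset_univ (G.componentIn Set.univ v))
    | succ i ih =>
      intro v hv
      calc 2 ^ (i + 1) * (G.componentIn (R (i + 1)) v).ncard
          = 2 ^ i * (2 * (G.componentIn (R i \ hA.centroids (R i)) v).ncard) := by
            simp only [R, greedyResidual]; ring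
        _ ≤ 2 ^ i * (G.componentIn (R i) v).ncard :=
          Nat.mul_le_mul_left _ (hA.two_mul_ncard_componentIn_sdiff_centroids_le hv)
        _ ≤ Nat.card V := ih v hv.1
  have hempty : R r = ∅ := Set.eq_empty_of_forall_notMem fun v hv => by
    have hpos := (Set.ncard_pos (Set.toFinite (G.componentIn (R r) v))).2
      ⟨v, mem_componentIn_self hv⟩
    exact (hbound r v hv).not_gt (hr.trans_le (Nat.le_mul_of_pos_right _ hpos))
  exact Nat.sInf_le ⟨_, isDisintegration_greedy hA.disStep_centroids hempty⟩

theorem IsAcyclic.resilience_le_log [Finite V] (hA : G.IsAcyclic) :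
    resilience G ≤ Nat.log 2 (Nat.card V) + 1 :=
  hA.resilience_le_of_card_lt (Nat.lt_pow_succ_log_self one_lt_two _)

end SimpleGraph

theorem stmt9_general {V : Type*} [Fintype V] (G : SimpleGraph V) (hT : G.IsTree)
    (d : ℕ) (hd : Fintype.card V = d) :
    (resilience G : ℝ) ≤ Real.logb 2 d + 1 := by
  have hres : resilience G ≤ Nat.log 2 d + 1 := by
    simpa [hd] using hT.isAcyclic.resilience_le_log
  calc (resilience G : ℝ) ≤ Nat.log 2 d + 1 := by exact_mod_cast hres
    _ ≤ Real.logb 2 d + 1 := by gcongr; exact_mod_cast Real.natLog_le_logb d 2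

theorem stmt9 {V : Type*} [Fintype V] (G : SimpleGraph V) (hT : G.IsTree)
    (d : ℕ) (hd : Fintype.card V = d) (h1 : 1 ≤ d) :
    (resilience G : ℝ) ≤ Real.logb 2 d + 1 :=
  stmt9_general G hT d hd
end

section
/- Let G' be a graph on [k] and G = (V, E) a graph with a partition V = V_1 ∪ ... ∪ V_k such that every edge {v, v'} of G with v ∈ V_i and v' ∈ V_j satisfies i = j or {i,j} is an edge of G'. Then the resilience of G is at most r(G') · max_i |V_i|. -/
open SimpleGraph

/-!
Take a shortest disintegration `D` of `G'` and disintegrate `G` greedily in blocks of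
`m = max |V_i|` steps: during the `t`-th block, every step picks in each component a vertex of a
class `V_i` with `i ∈ D t` whenever the component has one. Since `f` maps components of what is
left of `G` into components of what is left of `G'`, each of which meets `D t` in one vertex, a
component has at most `m` such vertices, and one block removes them all. So after `t` blocks the
remaining vertices lie in classes outside `D 0 ∪ ⋯ ∪ D (t - 1)`, and after `r(G')` blocks none
remain.
-/

namespace SimpleGraph

variable {V W : Type*}

theorem Reachable.map_of_adj_imp_eq_or_adj {G : SimpleGraph V} {H : SimpleGraph W} (f : V → W)
    (hf : ∀ v w, G.Adj v w → f v = f w ∨ H.Adj (f v) (f w)) {u v : V} (h : G.Reachable u v) :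
    H.Reachable (f u) (f v) := by
  rw [reachable_iff_reflTransGen] at h ⊢
  refine Relation.ReflTransGen.lift' f (fun a b hab => ?_) _ _ h
  rcases hf a b hab with heq | hadj
  · simp only [Function.onFun, heq, Relation.ReflTransGen.refl]
  · exact .single hadj

def inducedComponent (G : SimpleGraph V) (R : Set V) (v : V) : Set V :=
  {w | ∃ (hv : v ∈ R) (hw : w ∈ R), (G.induce R).Reachable ⟨v, hv⟩ ⟨w, hw⟩}

theorem inducedComponent_mono (G : SimpleGraph V) {R S : Set V} (hRS : R ⊆ S) (v : V) :
    G.inducedComponent R v ⊆ G.inducedComponent S v := by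
  rintro w ⟨hv, hw, hvw⟩
  exact ⟨hRS hv, hRS hw, hvw.map (G.induceHomOfLE hRS).toHom⟩

theorem image_inducedComponent_subset {G : SimpleGraph V} {H : SimpleGraph W} (f : V → W)
    (hf : ∀ v w, G.Adj v w → f v = f w ∨ H.Adj (f v) (f w)) {R : Set V} {S : Set W}
    (hRS : Set.MapsTo f R S) (v : V) :
    f '' G.inducedComponent R v ⊆ H.inducedComponent S (f v) := by
  rintro _ ⟨w, ⟨hv, hw, hvw⟩, rfl⟩
  refine ⟨hRS hv, hRS hw, hvw.map_of_adj_imp_eq_or_adj hRS.restrict fun a b hab => ?_⟩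
  exact (hf a b hab).imp Subtype.ext id

section Greedy

variable (G : SimpleGraph V)

noncomputable def greedyPick (R : Set V) (P : V → Prop) (c : (G.induce R).ConnectedComponent) :
    R :=
  open Classical in
  if h : ∃ v : R, (G.induce R).connectedComponentMk v = c ∧ P v then h.choose
  else c.exists_rep.choose

theorem connectedComponentMk_greedyPick (R : Set V) (P : V → Prop)
    (c : (G.induce R).ConnectedComponent) :
    (G.induce R).connectedComponentMk (G.greedyPick R P c) = c := by
  unfold greedyPick
  split_ifs with h
  · exact h.choose_spec.1
  · exact c.exists_rep.choose_spec

theorem greedyPick_spec {R : Set V} {P : V → Prop} {c : (G.induce R).ConnectedComponent}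
    (h : ∃ v : R, (G.induce R).connectedComponentMk v = c ∧ P v) : P (G.greedyPick R P c) := by
  rw [greedyPick, dif_pos h]
  exact h.choose_spec.2

theorem disStep_range {R : Set V} (σ : (G.induce R).ConnectedComponent → R)
    (hσ : ∀ c, (G.induce R).connectedComponentMk (σ c) = c) :
    DisStep G R (Set.range fun c => (σ c : V)) := by
  refine ⟨?_, ?_, fun c => ⟨_, ⟨c, rfl⟩, hσ c⟩⟩
  · rintro _ ⟨c, rfl⟩
    exact (σ c).2
  · rintro _ _ ⟨c, rfl⟩ ⟨c', rfl⟩ hne hcc'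
    obtain rfl : c = c' := (hσ c).symm.trans (hcc'.trans (hσ c'))
    exact hne rfl

noncomputable def greedyStep (R : Set V) (P : V → Prop) : Set V :=
  Set.range fun c => (G.greedyPick R P c : V)

theorem disStep_greedyStep (R : Set V) (P : V → Prop) : DisStep G R (G.greedyStep R P) :=
  G.disStep_range _ (G.connectedComponentMk_greedyPick R P)

theorem greedyStep_subset (R : Set V) (P : V → Prop) : G.greedyStep R P ⊆ R :=
  (G.disStep_greedyStep R P).1

noncomputable def greedyRemaining (P : ℕ → V → Prop) : ℕ → Set V
  | 0 => Set.univ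
  | s + 1 => greedyRemaining P s \ G.greedyStep (greedyRemaining P s) (P s)

noncomputable def greedySequence (P : ℕ → V → Prop) (s : ℕ) : Set V :=
  G.greedyStep (G.greedyRemaining P s) (P s)

variable (P : ℕ → V → Prop)

theorem greedyRemaining_antitone : Antitone (G.greedyRemaining P) :=
  antitone_nat_of_succ_le fun _ => Set.sdiff_subset

theorem greedyRemaining_eq (s : ℕ) :
    G.greedyRemaining P s = Set.univ \ ⋃ j < s, G.greedySequence P j := by
  induction s with
  | zero => simp [greedyRemaining]
  | succ s ih =>
    rw [greedyRemaining, ← greedySequence, ih, Set.sdiff_sdiff]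
    congr 1
    ext v
    simp only [Set.mem_union, Set.mem_iUnion, Nat.lt_succ_iff_lt_or_eq, exists_prop]
    constructor
    · rintro (⟨j, hj, hv⟩ | hv)
      exacts [⟨j, .inl hj, hv⟩, ⟨s, .inr rfl, hv⟩]
    · rintro ⟨j, hj | rfl, hv⟩
      exacts [.inl ⟨j, hj, hv⟩, .inr hv]

theorem isDisintegration_greedySequence {r : ℕ} (hr : G.greedyRemaining P r = ∅) :
    IsDisintegration G (G.greedySequence P) r := by
  refine ⟨fun i hi => ?_, ?_, fun i => G.greedyRemaining_eq P i ▸ G.disStep_greedyStep _ _⟩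
  · exact Set.subset_eq_empty
      ((G.greedyStep_subset _ _).trans (G.greedyRemaining_antitone P hi)) hr
  · rw [greedyRemaining_eq, Set.sdiff_eq_empty] at hr
    exact Set.eq_univ_of_univ_subset (hr.trans (Set.iUnion₂_subset_iUnion _ _))

theorem diff_greedyStep_ssubset {R : Set V} (hR : R.Nonempty) (Q : V → Prop) :
    R \ G.greedyStep R Q ⊂ R := by
  obtain ⟨v, hv⟩ := hR
  let p := G.greedyPick R Q ((G.induce R).connectedComponentMk ⟨v, hv⟩)
  exact (Set.ssubset_iff_of_subset Set.sdiff_subset).mpr ⟨p, p.2, fun hp => hp.2 ⟨_, rfl⟩⟩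

theorem greedyRemaining_card_eq_empty [Finite V] : G.greedyRemaining P (Nat.card V) = ∅ := by
  have hcard : ∀ s, (G.greedyRemaining P s).ncard ≤ Nat.card V - s := by
    intro s
    induction s with
    | zero => simp [greedyRemaining]
    | succ s ih =>
      rcases (G.greedyRemaining P s).eq_empty_or_nonempty with he | hne
      · rw [Set.subset_eq_empty (G.greedyRemaining_antitone P s.le_succ) he, Set.ncard_empty]
        exact Nat.zero_le _
      · have := Set.ncard_lt_ncard (G.diff_greedyStep_ssubset hne (P s))
        rw [greedyRemaining]
        omega
  exact (Set.ncard_eq_zero).mp (by simpa using hcard (Nat.card V))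

theorem ncard_inducedComponent_diff_greedyStep_lt [Finite V] {R : Set V} {Q : V → Prop} {v : V}
    (h : (G.inducedComponent (R \ G.greedyStep R Q) v ∩ {w | Q w}).Nonempty) :
    (G.inducedComponent (R \ G.greedyStep R Q) v ∩ {w | Q w}).ncard <
      (G.inducedComponent R v ∩ {w | Q w}).ncard := by
  obtain ⟨w, ⟨hv, hw, hvw⟩, hQw⟩ := h
  set c := (G.induce R).connectedComponentMk ⟨v, hv.1⟩
  have hQ : Q (G.greedyPick R Q c) := G.greedyPick_spec
    ⟨⟨w, hw.1⟩,
      ConnectedComponent.eq.mpr (hvw.map (G.induceHomOfLE Set.sdiff_subset).toHom).symm, hQw⟩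
  have hmem : (G.greedyPick R Q c : V) ∈ G.inducedComponent R v :=
    ⟨hv.1, (G.greedyPick R Q c).2,
      ConnectedComponent.exact (G.connectedComponentMk_greedyPick R Q c).symm⟩
  refine Set.ncard_lt_ncard ((Set.ssubset_iff_of_subset
    (Set.inter_subset_inter_left _ (G.inducedComponent_mono Set.sdiff_subset v))).mpr
    ⟨_, ⟨hmem, hQ⟩, ?_⟩)
  rintro ⟨⟨-, hp, -⟩, -⟩
  exact hp.2 ⟨c, rfl⟩

theorem not_of_mem_greedyRemaining_add [Finite V] (Q : V → Prop) (s m : ℕ)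
    (hP : ∀ j < m, P (s + j) = Q)
    (hbound : ∀ v, (G.inducedComponent (G.greedyRemaining P s) v ∩ {w | Q w}).ncard ≤ m)
    {v : V} (hv : v ∈ G.greedyRemaining P (s + m)) : ¬ Q v := by
  have key : ∀ j ≤ m, ∀ w,
      (G.inducedComponent (G.greedyRemaining P (s + j)) w ∩ {w | Q w}).ncard + j ≤ m := by
    intro j
    induction j with
    | zero => simpa using hbound
    | succ j ih =>
      intro hj w
      have hstep : G.greedyRemaining P (s + (j + 1)) =
          G.greedyRemaining P (s + j) \ G.greedyStep (G.greedyRemaining P (s + j)) Q := by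
        rw [← hP j hj]
        rfl
      rw [hstep]
      have := ih (by omega) w
      rcases (G.inducedComponent _ w ∩ {w | Q w}).eq_empty_or_nonempty with he | hne
      · rw [he, Set.ncard_empty]
        omega
      · have := G.ncard_inducedComponent_diff_greedyStep_lt hne
        omega
  intro hQ
  have := key m le_rfl v
  have : 0 < (G.inducedComponent (G.greedyRemaining P (s + m)) v ∩ {w | Q w}).ncard :=
    (Set.ncard_pos).mpr ⟨v, ⟨hv, hv, .refl _⟩, hQ⟩
  omega

end Greedy

theorem _root_.DisStep.subsingleton_inducedComponent_inter {H : SimpleGraph W} {S D : Set W}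
    (hD : DisStep H S D) (x : W) : (H.inducedComponent S x ∩ D).Subsingleton := by
  obtain ⟨hsub, hinj, -⟩ := hD
  rintro a ⟨⟨hx, ha, hxa⟩, haD⟩ b ⟨⟨hx', hb, hxb⟩, hbD⟩
  by_contra hne
  exact hinj a b haD hbD hne (ConnectedComponent.eq.mpr (hxa.symm.trans hxb))

theorem _root_.IsDisintegration.sdiff_eq_empty {H : SimpleGraph W} {D : ℕ → Set W} {r : ℕ}
    (hD : IsDisintegration H D r) : Set.univ \ ⋃ j < r, D j = ∅ := by
  refine Set.sdiff_eq_empty.mpr fun x _ => ?_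
  obtain ⟨i, hi⟩ := Set.mem_iUnion.mp (hD.2.1 ▸ Set.mem_univ x)
  have hir : i < r := by
    by_contra hri
    rw [hD.1 i (not_lt.mp hri)] at hi
    exact hi
  exact Set.mem_biUnion hir hi

theorem _root_.Set.ncard_le_of_subsingleton_image [Finite V] {f : V → W} {A : Set V} {m : ℕ}
    (hA : (f '' A).Subsingleton) (hm : ∀ i, (f ⁻¹' {i}).ncard ≤ m) : A.ncard ≤ m := by
  rcases A.eq_empty_or_nonempty with rfl | ⟨a, ha⟩
  · simp
  refine (Set.ncard_le_ncard fun b hb => ?_).trans (hm (f a))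
  exact hA (Set.mem_image_of_mem f hb) (Set.mem_image_of_mem f ha)

section ClassMap

variable {G : SimpleGraph V} {H : SimpleGraph W} (f : V → W) {D : ℕ → Set W} {m : ℕ}

theorem mapsTo_greedyRemaining_mul [Finite V]
    (hf : ∀ v w, G.Adj v w → f v = f w ∨ H.Adj (f v) (f w)) {r : ℕ}
    (hD : IsDisintegration H D r) (hm : ∀ i, (f ⁻¹' {i}).ncard ≤ m) (t : ℕ) :
    Set.MapsTo f (G.greedyRemaining (fun s v => f v ∈ D (s / m)) (t * m))
      (Set.univ \ ⋃ u < t, D u) := by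
  set P : ℕ → V → Prop := fun s v => f v ∈ D (s / m)
  induction t with
  | zero => simp
  | succ t ih =>
    intro v hv
    rw [Nat.succ_mul] at hv
    have hP : ∀ j < m, P (t * m + j) = fun w => f w ∈ D t := fun j hj => by
      change (fun w => f w ∈ D ((t * m + j) / m)) = _
      rw [Nat.div_eq_of_lt_le (k := t) (Nat.le_add_right _ _) (by rw [Nat.succ_mul]; omega)]
    have hbound : ∀ w, (G.inducedComponent (G.greedyRemaining P (t * m)) w ∩
        {w | f w ∈ D t}).ncard ≤ m := fun w =>
      Set.ncard_le_of_subsingleton_image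
        (((hD.2.2 t).subsingleton_inducedComponent_inter (f w)).anti
          ((Set.image_inter_subset f _ _).trans (Set.inter_subset_inter
            (image_inducedComponent_subset f hf ih w) (Set.image_preimage_subset f _)))) hm
    have hnot := G.not_of_mem_greedyRemaining_add P _ _ _ hP hbound hv
    have hprev := ih (G.greedyRemaining_antitone P (Nat.le_add_right _ _) hv)
    simp only [Set.mem_sdiff, Set.mem_univ, true_and, Set.mem_iUnion, not_exists] at hprev ⊢
    intro u hu
    rcases Nat.lt_succ_iff_lt_or_eq.mp hu with hut | rfl
    exacts [hprev u hut, hnot]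

theorem greedyRemaining_mul_eq_empty [Finite V]
    (hf : ∀ v w, G.Adj v w → f v = f w ∨ H.Adj (f v) (f w)) {r : ℕ}
    (hD : IsDisintegration H D r) (hm : ∀ i, (f ⁻¹' {i}).ncard ≤ m) :
    G.greedyRemaining (fun s v => f v ∈ D (s / m)) (r * m) = ∅ :=
  Set.eq_empty_of_forall_notMem fun v hv => by
    simpa [hD.sdiff_eq_empty] using mapsTo_greedyRemaining_mul f hf hD hm r hv

end ClassMap

end SimpleGraph

theorem resilience_le_of_isDisintegration {V : Type*} {G : SimpleGraph V} {D : ℕ → Set V}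
    {r : ℕ} (hD : IsDisintegration G D r) : resilience G ≤ r :=
  Nat.sInf_le ⟨D, hD⟩

theorem exists_isDisintegration_resilience {V : Type*} [Finite V] (G : SimpleGraph V) :
    ∃ D, IsDisintegration G D (resilience G) :=
  Nat.sInf_mem (s := {r | ∃ D, IsDisintegration G D r})
    ⟨_, _, G.isDisintegration_greedySequence _
      (G.greedyRemaining_card_eq_empty fun _ _ => True)⟩

theorem resilience_le_mul_of_adj_imp_eq_or_adj {V W : Type*} [Finite V] [Finite W]
    {G : SimpleGraph V} {H : SimpleGraph W} (f : V → W)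
    (hf : ∀ v w, G.Adj v w → f v = f w ∨ H.Adj (f v) (f w)) {m : ℕ}
    (hm : ∀ i, (f ⁻¹' {i}).ncard ≤ m) : resilience G ≤ resilience H * m := by
  obtain ⟨D, hD⟩ := exists_isDisintegration_resilience H
  exact resilience_le_of_isDisintegration
    (G.isDisintegration_greedySequence _ (greedyRemaining_mul_eq_empty f hf hD hm))

theorem stmt13_general {V : Type*} [Fintype V] (k : ℕ)
    (G' : SimpleGraph (Fin k)) (G : SimpleGraph V) (f : V → Fin k)
    (h : ∀ v w, G.Adj v w → f v = f w ∨ G'.Adj (f v) (f w)) :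
    resilience G ≤
      resilience G' * Finset.univ.sup (fun i => (Finset.univ.filter fun v => f v = i).card) := by
  refine resilience_le_mul_of_adj_imp_eq_or_adj f h fun i => ?_
  have hfibre : f ⁻¹' {i} = ↑(Finset.univ.filter fun v => f v = i) := by
    ext
    simp
  rw [hfibre, Set.ncard_coe_finset]
  exact Finset.le_sup (f := fun i => (Finset.univ.filter fun v => f v = i).card) (Finset.mem_univ i)

theorem stmt13 {V : Type*} [Fintype V] [DecidableEq V] (k : ℕ)
    (G' : SimpleGraph (Fin k)) (G : SimpleGraph V) (f : V → Fin k)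
    (h : ∀ v w, G.Adj v w → f v = f w ∨ G'.Adj (f v) (f w)) :
    resilience G ≤
      resilience G' * Finset.univ.sup (fun i => (Finset.univ.filter fun v => f v = i).card) :=
  stmt13_general k G' G f h
end
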